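/- Let G be a τ-critical graph and let S be an independent set of vertices of G. Then for every vertex v ∈ S, d(v) ≤ |N(S)| − |S| + 1, where N(S) denotes the set of vertices of G adjacent to some vertex of S. -/

import Mathlib

open SimpleGraph

variable {V : Type*}

/-- A transversal set (vertex cover): a set of vertices incident to all edges. -/
def IsTransversal (G : SimpleGraph V) (T : Finset V) : Prop :=
  ∀ ⦃u v : V⦄, G.Adj u v → u ∈ T ∨ v ∈ T

/-- The transversal number `τ(G)`: minimum cardinality of a transversal set. -/
noncomputable def tauNum (G : SimpleGraph V) [Fintype V] : ℕ :=
  sInf {k | ∃ T : Finset V, T.card = k ∧ IsTransversal G T}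

/-- `G` is τ-critical: it has no isolated vertex and deleting any edge decreases `τ`. -/
def IsTauCritical (G : SimpleGraph V) [Fintype V] : Prop :=
  (∀ v : V, ∃ u, G.Adj v u) ∧
    ∀ e ∈ G.edgeSet, tauNum (G.deleteEdges {e}) < tauNum G

/-- `mK2 m` is the disjoint union of `m` copies of `K₂`. -/
def mK2 (m : ℕ) : SimpleGraph (Fin m × Fin 2) where
  Adj x y := x.1 = y.1 ∧ x.2 ≠ y.2
  symm := ⟨fun _ _ ⟨h1, h2⟩ => ⟨h1.symm, h2.symm⟩⟩
  loopless := ⟨fun _ ⟨_, h⟩ => h rfl⟩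

/-- The spectral radius `λ₁(G)`: the largest eigenvalue of the adjacency matrix of `G`. -/
noncomputable def specRad (G : SimpleGraph V) [Fintype V] [DecidableEq V]
    [DecidableRel G.Adj] : ℝ :=
  sSup (spectrum ℝ (G.adjMatrix ℝ))

/-- The signless Laplacian spectral radius `q₁(G)`: the largest eigenvalue of
`Q(G) = D(G) + A(G)`. -/
noncomputable def signlessLapSpecRad (G : SimpleGraph V) [Fintype V] [DecidableEq V]
    [DecidableRel G.Adj] : ℝ :=
  sSup (spectrum ℝ (Matrix.diagonal (fun v => (G.degree v : ℝ)) + G.adjMatrix ℝ))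

/-! Write `W = S \ {v}` and `X = N(W) \ N(v)`; the bound amounts to `|W| ≤ |X|`, and by strong
induction on `W` the family `w ↦ N(w) \ N(v)` satisfies Hall's condition on every proper subset
of `W`. If it fails on `W` itself, then `|W| = |X| + 1`, and Hall's theorem yields a matching
`M → Y` with `M ⊆ W` and an edge `ab` with `b ∈ Y`: if `v` and `W` have a common neighbour `u`,
match `W` onto `Y = X ∪ {u}` and take `ab = vu`; otherwise `N(W) ⊆ X`, so for `w₀ ∈ W` and a
neighbour `x₀` of it match `W \ {w₀}` onto `Y = X` and take `ab = w₀x₀`.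
Criticality of `ab` gives a set `J ∋ a, b`, independent in `G - ab`, with `|J| + τ(G) > |V|`.
Since `J` holds at most one end of each matching edge, `J \ (W ∪ Y) ∪ W` is independent and
no smaller than `J`, contradicting `|I| + τ(G) ≤ |V|` for independent `I`. -/

open Finset

namespace Finset

variable {α β : Type*} [DecidableEq β]

theorem exists_injOn_of_hall [Nonempty β] {s : Finset α} {t : α → Finset β}
    (h : ∀ u ⊆ s, #u ≤ #(u.biUnion t)) : ∃ f : α → β, Set.InjOn f s ∧ ∀ i ∈ s, f i ∈ t i := by
  classical
  obtain ⟨g, hg, hgt⟩ := (all_card_le_biUnion_card_iff_existsInjective' fun i : s => t i).1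
    fun u : Finset s => by
      simpa [image_biUnion, card_image_of_injective _ Subtype.val_injective] using
        h (u.image Subtype.val) (by simp +contextual [subset_iff])
  refine ⟨fun i => if hi : i ∈ s then g ⟨i, hi⟩ else Classical.arbitrary β, ?_, ?_⟩
  · intro i hi j hj hij
    simp only [mem_coe] at hi hj
    exact congrArg Subtype.val (hg (by simpa [hi, hj] using hij))
  · intro i hi
    simpa [hi] using hgt ⟨i, hi⟩

theorem exists_image_eq_of_hall [Nonempty β] {s : Finset α} {t : α → Finset β} {Y : Finset β}
    (h : ∀ u ⊆ s, #u ≤ #(u.biUnion t)) (htY : ∀ i ∈ s, t i ⊆ Y) (hY : #Y ≤ #s) :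
    ∃ f : α → β, (∀ i ∈ s, f i ∈ t i) ∧ s.image f = Y := by
  classical
  obtain ⟨f, hinj, hft⟩ := exists_injOn_of_hall h
  refine ⟨f, hft, eq_of_subset_of_card_le ?_ (by rwa [card_image_of_injOn hinj])⟩
  simp only [image_subset_iff]
  exact fun i hi => htY i hi (hft i hi)

theorem card_eq_card_biUnion_add_one {s : Finset α} {t : α → Finset β}
    (h : ∀ u ⊂ s, #u ≤ #(u.biUnion t)) (hlt : #(s.biUnion t) < #s) :
    #s = #(s.biUnion t) + 1 := by
  by_contra hne
  obtain ⟨u, hus, hu⟩ := exists_subset_card_eq (s := s) (n := #(s.biUnion t) + 1) (by omega)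
  have := h u (ssubset_of_subset_of_ne hus (by rintro rfl; omega))
  have := card_le_card (biUnion_subset_biUnion_of_subset_left t hus)
  omega

theorem biUnion_sdiff_eq_biUnion_erase [DecidableEq α] (s : Finset α) (t : α → Finset β) (a : α) :
    s.biUnion t \ t a = (s.erase a).biUnion fun i => t i \ t a := by
  ext x
  simp only [mem_sdiff, mem_biUnion, mem_erase]
  grind

theorem card_le_card_sdiff_union [DecidableEq α] {J T W : Finset α} (hWT : W ⊆ T)
    (h : #(J ∩ T) ≤ #W) : #J ≤ #(J \ T ∪ W) := by
  rw [card_union_of_disjoint (disjoint_of_subset_right hWT sdiff_disjoint)]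
  have := card_sdiff_add_card_inter J T
  omega

theorem card_inter_union_le [DecidableEq α] {J W M Y : Finset α} {f : α → α} (hMW : M ⊆ W)
    (hY : Y ⊆ M.image f) (hJ : ∀ w ∈ M, w ∈ J → f w ∉ J) : #(J ∩ (W ∪ Y)) ≤ #W := by
  have hJY : J ∩ Y ⊆ (W \ J).image f := by
    intro y hy
    obtain ⟨w, hw, rfl⟩ := mem_image.1 (hY (mem_inter.1 hy).2)
    exact mem_image_of_mem f (mem_sdiff.2 ⟨hMW hw, fun hwJ => hJ w hw hwJ (mem_inter.1 hy).1⟩)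
  calc #(J ∩ (W ∪ Y)) ≤ #(J ∩ W) + #(J ∩ Y) := by
        rw [inter_union_distrib_left]; exact card_union_le _ _
    _ ≤ #(W ∩ J) + #(W \ J) := by
        rw [inter_comm]; exact add_le_add_right ((card_le_card hJY).trans card_image_le) _
    _ = #W := card_inter_add_card_sdiff W J

end Finset

theorem isTransversal_iff_isVertexCover {G : SimpleGraph V} {T : Finset V} :
    IsTransversal G T ↔ G.IsVertexCover (T : Set V) := Iff.rfl

theorem exists_isTransversal_card_eq_tauNum (G : SimpleGraph V) [Fintype V] :
    ∃ T : Finset V, #T = tauNum G ∧ IsTransversal G T :=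
  Nat.sInf_mem (s := {k | ∃ T : Finset V, #T = k ∧ IsTransversal G T})
    ⟨_, univ, rfl, fun u _ _ => Or.inl (mem_univ u)⟩

section

variable {G : SimpleGraph V} [Fintype V]

theorem IsTransversal.tauNum_le_card {T : Finset V} (hT : IsTransversal G T) : tauNum G ≤ #T :=
  Nat.sInf_le ⟨T, rfl, hT⟩

variable [DecidableEq V]

theorem SimpleGraph.IsIndepSet.card_add_tauNum_le {K : Finset V}
    (hK : G.IsIndepSet (K : Set V)) : #K + tauNum G ≤ Fintype.card V := by
  have hT : IsTransversal G Kᶜ := by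
    rw [isTransversal_iff_isVertexCover, coe_compl]
    exact isVertexCover_compl.2 hK
  have := hT.tauNum_le_card
  rw [card_compl] at this
  have := card_le_univ K
  omega

theorem IsTauCritical.exists_isIndepSet_deleteEdges (hcrit : IsTauCritical G) {a b : V}
    (hab : G.Adj a b) : ∃ J : Finset V, (G.deleteEdges {s(a, b)}).IsIndepSet (J : Set V) ∧
      a ∈ J ∧ b ∈ J ∧ Fintype.card V < #J + tauNum G := by
  obtain ⟨T, hTcard, hT⟩ := exists_isTransversal_card_eq_tauNum (G.deleteEdges {s(a, b)})
  have hlt := hcrit.2 s(a, b) hab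
  -- a cover of `G - ab` that meets `ab` would cover `G`, contradicting `τ(G - ab) < τ(G)`
  have hab_notMem : a ∉ T ∧ b ∉ T := by
    by_contra! hmeets
    refine (IsTransversal.tauNum_le_card (T := T) fun x y hxy => ?_).not_gt (hTcard ▸ hlt)
    by_cases he : s(x, y) = s(a, b)
    · rcases Sym2.eq_iff.1 he with ⟨rfl, rfl⟩ | ⟨rfl, rfl⟩ <;> tauto
    · exact hT (by simp [hxy, he])
  refine ⟨Tᶜ, ?_, by simp [hab_notMem.1], by simp [hab_notMem.2], ?_⟩
  · rw [coe_compl]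
    exact isIndepSet_compl_iff_isVertexCover.2 hT
  · have := card_le_univ T
    rw [card_compl]
    omega

theorem IsTauCritical.not_subset_image_of_adj (hcrit : IsTauCritical G) {a b : V} (hab : G.Adj a b)
    {W M Y : Finset V} {f : V → V} (hW : G.IsIndepSet (W : Set V))
    (hNW : ∀ w ∈ W, ∀ z, G.Adj w z → z ∈ Y ∨ G.Adj a z) (hbY : b ∈ Y)
    (hMW : M ⊆ W) (haM : a ∉ M) (hbM : b ∉ M) (hf : ∀ w ∈ M, G.Adj w (f w)) :
    ¬ Y ⊆ M.image f := by
  intro hY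
  obtain ⟨J, hJ, haJ, -, hJcard⟩ := hcrit.exists_isIndepSet_deleteEdges hab
  have hJab : ∀ x ∈ J, ∀ y ∈ J, G.Adj x y → s(x, y) = s(a, b) := by
    intro x hx y hy hxy
    by_contra hne
    exact hJ hx hy hxy.ne (by simp [hxy, hne])
  -- trading `J ∩ (W ∪ Y)` for `W` keeps the set independent and does not shrink it
  have hI : G.IsIndepSet ((J \ (W ∪ Y) ∪ W : Finset V) : Set V) := by
    intro x hx y hy _ hxy
    simp only [coe_union, coe_sdiff, Set.mem_union, Set.mem_sdiff, mem_coe] at hx hy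
    rcases hx with ⟨hxJ, hxWY⟩ | hxW <;> rcases hy with ⟨hyJ, hyWY⟩ | hyW
    · rcases Sym2.eq_iff.1 (hJab x hxJ y hyJ hxy) with ⟨-, rfl⟩ | ⟨rfl, -⟩ <;> tauto
    · rcases hNW y hyW x hxy.symm with hxY | hax
      · exact hxWY (Or.inr hxY)
      · exact hxWY (Or.inr (Sym2.congr_right.1 (hJab a haJ x hxJ hax) ▸ hbY))
    · rcases hNW x hxW y hxy with hyY | hay
      · exact hyWY (Or.inr hyY)
      · exact hyWY (Or.inr (Sym2.congr_right.1 (hJab a haJ y hyJ hay) ▸ hbY))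
    · exact hW hxW hyW ‹_› hxy
  -- `w (f w)` is an edge other than `ab`, the only edge of `G` inside `J`
  have hmatch : ∀ w ∈ M, w ∈ J → f w ∉ J := fun w hw hwJ hfwJ => by
    rcases Sym2.eq_iff.1 (hJab w hwJ (f w) hfwJ (hf w hw)) with ⟨rfl, -⟩ | ⟨rfl, -⟩
    exacts [haM hw, hbM hw]
  have := card_le_card_sdiff_union subset_union_left (card_inter_union_le hMW hY hmatch)
  have := hI.card_add_tauNum_le
  omega

variable [DecidableRel G.Adj]

theorem IsTauCritical.card_ne_card_biUnion_add_one_of_common_neighbor (hcrit : IsTauCritical G)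
    {v u w₁ : V} {W : Finset V} (hvW : v ∉ W) (hW : G.IsIndepSet (insert v W : Finset V))
    (hHall : ∀ U ⊂ W, #U ≤ #(U.biUnion fun w => G.neighborFinset w \ G.neighborFinset v))
    (hvu : G.Adj v u) (hw₁ : w₁ ∈ W) (hw₁u : G.Adj w₁ u) :
    #W ≠ #(W.biUnion fun w => G.neighborFinset w \ G.neighborFinset v) + 1 := by
  set X := W.biUnion fun w => G.neighborFinset w \ G.neighborFinset v
  intro htight
  have huW : u ∉ W := fun hu => hW (by simp) (by simp [hu]) hvu.ne hvu
  have huX : u ∉ X := by simp [X, hvu]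
  set A := fun w => G.neighborFinset w \ (G.neighborFinset v).erase u
  have hAX : ∀ w ∈ W, A w ⊆ insert u X := by
    intro w hw z hz
    simp only [A, mem_sdiff, mem_erase, mem_neighborFinset, not_and_or, not_not] at hz
    simp only [X, mem_insert, mem_biUnion, mem_sdiff, mem_neighborFinset]
    grind
  have hHallA : ∀ U ⊆ W, #U ≤ #(U.biUnion A) := by
    intro U hU
    rcases hU.ssubset_or_eq with hU | rfl
    · exact (hHall U hU).trans <| card_le_card <|
        biUnion_mono fun w _ => sdiff_subset_sdiff le_rfl (erase_subset u _)
    · have hsub : insert u X ⊆ U.biUnion A := by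
        simp only [X, A, insert_subset_iff, mem_biUnion, mem_sdiff, mem_erase,
          mem_neighborFinset]
        exact ⟨⟨w₁, hw₁, hw₁u, by simp⟩,
          biUnion_mono fun w _ => sdiff_subset_sdiff le_rfl (erase_subset u _)⟩
      rw [htight, ← card_insert_of_notMem huX]
      exact card_le_card hsub
  obtain ⟨F, hFA, hFX⟩ := have : Nonempty V := ⟨v⟩
    exists_image_eq_of_hall hHallA hAX (by rw [card_insert_of_notMem huX]; omega)
  refine hcrit.not_subset_image_of_adj hvu (hW.mono (by simp)) (fun w hw z hwz => ?_)
    (mem_insert_self u X) subset_rfl hvW huW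
    (fun w hw => (mem_neighborFinset _ _ _).1 (mem_sdiff.1 (hFA w hw)).1) hFX.ge
  by_cases hvz : G.Adj v z
  · exact Or.inr hvz
  · exact Or.inl (mem_insert_of_mem (mem_biUnion.2 ⟨w, hw, by simp [hwz, hvz]⟩))

theorem IsTauCritical.card_ne_card_biUnion_add_one_of_no_common_neighbor (hcrit : IsTauCritical G)
    {v : V} {W : Finset V} (hW : G.IsIndepSet (W : Set V))
    (hHall : ∀ U ⊂ W, #U ≤ #(U.biUnion fun w => G.neighborFinset w \ G.neighborFinset v))
    (hvW : ∀ w ∈ W, ∀ z, G.Adj w z → ¬ G.Adj v z) :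
    #W ≠ #(W.biUnion fun w => G.neighborFinset w \ G.neighborFinset v) + 1 := by
  set X := W.biUnion fun w => G.neighborFinset w \ G.neighborFinset v
  intro htight
  have hNX : ∀ w ∈ W, ∀ z, G.Adj w z → z ∈ X := fun w hw z hwz =>
    mem_biUnion.2 ⟨w, hw, by simp [hwz, hvW w hw z hwz]⟩
  obtain ⟨w₀, hw₀⟩ : W.Nonempty := card_pos.1 (by omega)
  obtain ⟨x₀, hx₀⟩ := hcrit.1 w₀
  have hx₀W : x₀ ∉ W := fun hx => hW hw₀ hx hx₀.ne hx₀
  obtain ⟨F, hFX, hFim⟩ := have : Nonempty V := ⟨w₀⟩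
    exists_image_eq_of_hall (s := W.erase w₀) (Y := X)
      (fun U hU => hHall U (ssubset_of_subset_of_ne (hU.trans (erase_subset _ _))
        fun h => notMem_erase w₀ W (hU (h ▸ hw₀))))
      (fun w hw => subset_biUnion_of_mem (fun w => G.neighborFinset w \ G.neighborFinset v)
        (mem_of_mem_erase hw))
      (by rw [card_erase_of_mem hw₀]; omega)
  refine hcrit.not_subset_image_of_adj hx₀ hW (fun w hw z hwz => Or.inl (hNX w hw z hwz))
    (hNX w₀ hw₀ x₀ hx₀) (erase_subset _ _) (notMem_erase w₀ W)
    (fun h => hx₀W (mem_of_mem_erase h))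
    (fun w hw => (mem_neighborFinset _ _ _).1 (mem_sdiff.1 (hFX w hw)).1) hFim.ge

theorem IsTauCritical.card_le_card_biUnion_neighborFinset_sdiff (hcrit : IsTauCritical G)
    {v : V} {W : Finset V} (hvW : v ∉ W) (hW : G.IsIndepSet (insert v W : Finset V)) :
    #W ≤ #(W.biUnion fun w => G.neighborFinset w \ G.neighborFinset v) := by
  induction W using Finset.strongInduction with
  | H W ih =>
  have hHall : ∀ U ⊂ W, #U ≤ #(U.biUnion fun w => G.neighborFinset w \ G.neighborFinset v) :=
    fun U hU => ih U hU (fun h => hvW (hU.subset h))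
      (hW.mono (by simpa using Set.insert_subset_insert hU.subset))
  by_contra! hlt
  have htight := card_eq_card_biUnion_add_one hHall hlt
  by_cases hcommon : ∃ u, G.Adj v u ∧ ∃ w ∈ W, G.Adj w u
  · obtain ⟨u, hvu, w, hw, hwu⟩ := hcommon
    exact hcrit.card_ne_card_biUnion_add_one_of_common_neighbor hvW hW hHall hvu hw hwu htight
  · push Not at hcommon
    exact hcrit.card_ne_card_biUnion_add_one_of_no_common_neighbor (hW.mono (by simp)) hHall
      (fun w hw z hwz hvz => hcommon z hvz w hw hwz) htight

end

/-- Surányi. For a τ-critical graph `G` and an independent set `S`,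
every `v ∈ S` satisfies `d(v) ≤ |N(S)| − |S| + 1`, where `N(S)` is the set of vertices
adjacent to some vertex of `S`. -/
theorem tau_critical_degree_le_of_indep (G : SimpleGraph V) [Fintype V] [DecidableEq V]
    [DecidableRel G.Adj] (hcrit : IsTauCritical G) (S : Finset V)
    (hS : ∀ u ∈ S, ∀ v ∈ S, ¬ G.Adj u v) :
    ∀ v ∈ S, (G.degree v : ℤ) ≤
      ((S.biUnion fun u => G.neighborFinset u).card : ℤ) - S.card + 1 := by
  intro v hv
  have key := hcrit.card_le_card_biUnion_neighborFinset_sdiff (notMem_erase v S)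
    (by rw [insert_erase hv]; exact fun x hx y hy _ => hS x hx y hy)
  rw [← biUnion_sdiff_eq_biUnion_erase] at key
  have hdeg := card_sdiff_add_card_eq_card (subset_biUnion_of_mem (G.neighborFinset ·) hv)
  rw [card_neighborFinset_eq_degree] at hdeg
  have := card_erase_add_one hv
  omega
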